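/- arXiv:2509.18858 — 3 statements merged into one kernel-verified Lean document; each statement's English description precedes it below -/
import Mathlib

section
/- Suppose a real symmetric matrix L (with spectral decomposition L = Σ_r θ_r F_{θ_r}) satisfies: for every eigenvalue θ in the eigenvalue support of e_a − e_b, either F_θ(e_a − e_b) = F_θ(e_c − e_d) or F_θ(e_a − e_b) = −F_θ(e_c − e_d) (strong cospectrality), and at time τ₀ one has exp(iτ₀(θ₀ − θ)) = 1 for all θ in the '+' class and exp(iτ₀(θ₀ − θ)) = −1 for all θ in the '−' class, where θ₀ lies in the '+' class. Then U_L(τ₀)(e_a − e_b) = exp(−iτ₀θ₀)(e_c − e_d). -/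
open Matrix Complex Kronecker

/-- transition matrix `U_M(t) = exp(-itM)` -/
noncomputable def U {V : Type*} [Fintype V] [DecidableEq V] (M : Matrix V V ℂ) (t : ℝ) :
    Matrix V V ℂ :=
  NormedSpace.exp ((-(Complex.I * (t : ℂ))) • M)

/-- standard basis vector -/
noncomputable def e {V : Type*} [DecidableEq V] (v : V) : V → ℂ := Pi.single v 1

/-- Kronecker product of vectors -/
def vecKron {α β : Type*} (u : α → ℂ) (v : β → ℂ) : α × β → ℂ := fun p => u p.1 * v p.2

/-! Since `c ↦ ∑ c_r • F_r` is a continuous algebra homomorphism out of `ι → ℂ`, it commutes with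
the exponential, so `U_L(τ₀) = ∑ exp(-iτ₀θ_r) • F_r`. On each eigenspace the phase
`exp(-iτ₀θ_r)` is `exp(-iτ₀θ₀)` times the sign `±1` with which `F_r (e_a - e_b) = ±F_r (e_c - e_d)`,
so every summand of `U_L(τ₀) (e_a - e_b)` equals `exp(-iτ₀θ₀) F_r (e_c - e_d)`, and these sum to
`exp(-iτ₀θ₀) (e_c - e_d)`. -/

namespace CompleteOrthogonalIdempotents

variable {R A ι : Type*} [Fintype ι] [CommSemiring R] [Semiring A] [Algebra R A] {F : ι → A}

variable (R) in
def sumSMulAlgHom (hF : CompleteOrthogonalIdempotents F) : (ι → R) →ₐ[R] A where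
  toFun f := ∑ i, f i • F i
  map_one' := by simp [hF.complete]
  map_mul' f g := by
    classical
    simp only [Pi.mul_apply, Finset.sum_mul_sum, smul_mul_smul_comm, hF.mul_eq, smul_ite, smul_zero,
      Finset.sum_ite_eq, Finset.mem_univ, if_true]
  map_zero' := by simp
  map_add' f g := by simp [add_smul, Finset.sum_add_distrib]
  commutes' r := by simp [Algebra.algebraMap_eq_smul_one, ← Finset.smul_sum, hF.complete]

@[simp]
theorem sumSMulAlgHom_apply (hF : CompleteOrthogonalIdempotents F) (c : ι → R) :
    hF.sumSMulAlgHom R c = ∑ i, c i • F i := rfl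

end CompleteOrthogonalIdempotents

theorem CompleteOrthogonalIdempotents.exp_sum_smul {𝕜 A ι : Type*} [Fintype ι] [RCLike 𝕜]
    [NormedRing A] [NormedAlgebra 𝕜 A] [Algebra ℚ A] {F : ι → A}
    (hF : CompleteOrthogonalIdempotents F) (c : ι → 𝕜) :
    NormedSpace.exp (∑ i, c i • F i) = ∑ i, NormedSpace.exp (c i) • F i := by
  have hcont : Continuous (hF.sumSMulAlgHom 𝕜) := by
    change Continuous fun c : ι → 𝕜 => ∑ i, c i • F i
    fun_prop
  rw [← hF.sumSMulAlgHom_apply, ← NormedSpace.map_exp _ hcont, sumSMulAlgHom_apply]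
  simp only [Pi.coe_exp]

theorem Matrix.exp_sum_smul_of_completeOrthogonalIdempotents {𝕜 m ι : Type*} [Fintype ι]
    [RCLike 𝕜] [Fintype m] [DecidableEq m] {F : ι → Matrix m m 𝕜}
    (hF : CompleteOrthogonalIdempotents F) (c : ι → 𝕜) :
    NormedSpace.exp (∑ i, c i • F i) = ∑ i, NormedSpace.exp (c i) • F i := by
  let : NormedRing (Matrix m m 𝕜) := Matrix.linftyOpNormedRing
  let : NormedAlgebra 𝕜 (Matrix m m 𝕜) := Matrix.linftyOpNormedAlgebra
  exact hF.exp_sum_smul c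

theorem Matrix.sum_smul_mulVec_eq_smul {R m ι : Type*} [Fintype ι] [Fintype m] [DecidableEq m]
    [CommSemiring R] {F : ι → Matrix m m R} (hF : ∑ i, F i = 1) {u : ι → R} {w : R}
    {v x : m → R} (h : ∀ i, u i • (F i *ᵥ v) = w • (F i *ᵥ x)) :
    (∑ i, u i • F i) *ᵥ v = w • x := by
  calc (∑ i, u i • F i) *ᵥ v = ∑ i, w • (F i *ᵥ x) := by
        simp only [sum_mulVec, smul_mulVec, h]
    _ = w • x := by rw [← Finset.smul_sum, ← sum_mulVec, hF, one_mulVec]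

theorem U_eq_sum_exp_smul {m ι : Type*} [Fintype m] [DecidableEq m] [Fintype ι]
    {F : ι → Matrix m m ℂ} (hF : CompleteOrthogonalIdempotents F) {L : Matrix m m ℂ}
    {θ : ι → ℂ} (hL : L = ∑ i, θ i • F i) (t : ℝ) :
    U L t = ∑ i, Complex.exp (-(I * t * θ i)) • F i := by
  rw [U, hL, Finset.smul_sum]
  simp_rw [smul_smul, Complex.exp_eq_exp_ℂ]
  rw [exp_sum_smul_of_completeOrthogonalIdempotents hF]
  simp only [neg_mul]

theorem stmt2_general {n : ℕ} (L : Matrix (Fin n) (Fin n) ℂ)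
    {ι : Type*} [Fintype ι] [DecidableEq ι] (θ : ι → ℝ) (F : ι → Matrix (Fin n) (Fin n) ℂ)
    (hsum : ∑ i, F i = 1)
    (horth : ∀ i j, F i * F j = if i = j then F i else 0)
    (hspec : L = ∑ i, ((θ i : ℝ) : ℂ) • F i)
    (a b c d : Fin n) (τ₀ : ℝ) (i₀ : ι)
    (hcases : ∀ i,
      (F i *ᵥ (e a - e b) = F i *ᵥ (e c - e d) ∧
        Complex.exp (Complex.I * (τ₀ : ℂ) * ((θ i₀ - θ i : ℝ) : ℂ)) = 1) ∨
      (F i *ᵥ (e a - e b) = -(F i *ᵥ (e c - e d)) ∧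
        Complex.exp (Complex.I * (τ₀ : ℂ) * ((θ i₀ - θ i : ℝ) : ℂ)) = -1) ∨
      (F i *ᵥ (e a - e b) = 0 ∧ F i *ᵥ (e c - e d) = 0)) :
    (U L τ₀) *ᵥ (e a - e b)
      = Complex.exp (-(Complex.I * (τ₀ : ℂ) * ((θ i₀ : ℝ) : ℂ))) • (e c - e d) := by
  have hF : CompleteOrthogonalIdempotents F := ⟨OrthogonalIdempotents.iff_mul_eq.mpr horth, hsum⟩
  rw [U_eq_sum_exp_smul hF hspec]
  refine sum_smul_mulVec_eq_smul hsum fun i => ?_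
  have hphase : Complex.exp (-(I * τ₀ * θ i)) =
      Complex.exp (-(I * τ₀ * θ i₀)) * Complex.exp (I * τ₀ * ((θ i₀ - θ i : ℝ) : ℂ)) := by
    rw [← Complex.exp_add]
    push_cast
    ring_nf
  rcases hcases i with ⟨hv, hexp⟩ | ⟨hv, hexp⟩ | ⟨hva, hvc⟩
  · rw [hv, hphase, hexp, mul_one]
  · rw [hv, hphase, hexp, mul_neg_one, neg_smul, smul_neg, neg_neg]
  · rw [hva, hvc, smul_zero, smul_zero]

theorem stmt2 {n : ℕ} (L : Matrix (Fin n) (Fin n) ℂ) (hL : L.IsHermitian)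
    {ι : Type*} [Fintype ι] [DecidableEq ι] (θ : ι → ℝ) (F : ι → Matrix (Fin n) (Fin n) ℂ)
    (hsum : ∑ i, F i = 1)
    (horth : ∀ i j, F i * F j = if i = j then F i else 0)
    (hspec : L = ∑ i, ((θ i : ℝ) : ℂ) • F i)
    (a b c d : Fin n) (τ₀ : ℝ) (i₀ : ι)
    (hi₀ : F i₀ *ᵥ (e a - e b) = F i₀ *ᵥ (e c - e d) ∧ F i₀ *ᵥ (e a - e b) ≠ 0)
    (hcases : ∀ i,
      (F i *ᵥ (e a - e b) = F i *ᵥ (e c - e d) ∧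
        Complex.exp (Complex.I * (τ₀ : ℂ) * ((θ i₀ - θ i : ℝ) : ℂ)) = 1) ∨
      (F i *ᵥ (e a - e b) = -(F i *ᵥ (e c - e d)) ∧
        Complex.exp (Complex.I * (τ₀ : ℂ) * ((θ i₀ - θ i : ℝ) : ℂ)) = -1) ∨
      (F i *ᵥ (e a - e b) = 0 ∧ F i *ᵥ (e c - e d) = 0)) :
    (U L τ₀) *ᵥ (e a - e b)
      = Complex.exp (-(Complex.I * (τ₀ : ℂ) * ((θ i₀ : ℝ) : ℂ))) • (e c - e d) :=
  stmt2_general L θ F hsum horth hspec a b c d τ₀ i₀ hcases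
end

section
/- Let G be an r₁-regular graph on n vertices with Laplacian spectral decomposition L_G = Σ_{r=0}^{p} θ_r F_{θ_r}, and let H be an r₂-regular graph on m vertices with adjacency matrix A_H. Then the Laplacian transition matrix of the tensor product G × H satisfies U_{L_{G×H}}(t) = e^{−i r₁ r₂ t} Σ_{r=0}^{p} F_{θ_r} ⊗ U_{A_H}((θ_r − r₁)t). -/
open Matrix Complex Kronecker

/-!
Since `G` is `r₁`-regular, `A_G = ∑ (r₁ - θ_r) F_r`, so
`L_{G×H} = r₁r₂ I - ∑ F_r ⊗ (r₁ - θ_r) A_H`. The scalar part splits off the exponential as the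
phase `exp(-i r₁ r₂ t)`. For the rest, `N ↦ ∑ F_r ⊗ N_r` is an algebra homomorphism out of
`ι → Matrix m m ℂ`, because the `F_r` are orthogonal idempotents summing to `1`; being continuous,
it commutes with `exp`, which gives `exp(∑ F_r ⊗ N_r) = ∑ F_r ⊗ exp N_r`.
-/

namespace Matrix

variable {κ n m R : Type*} [Fintype κ]

theorem sum_kronecker [CommSemiring R] (A : κ → Matrix n n R) (B : Matrix m m R) :
    (∑ i, A i) ⊗ₖ B = ∑ i, A i ⊗ₖ B :=
  map_sum ((kroneckerBilinear (R := R)).flip B) A Finset.univ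

theorem ite_kronecker [MulZeroClass R] (p : Prop) [Decidable p] (A : Matrix n n R)
    (B : Matrix m m R) : (if p then A else 0) ⊗ₖ B = if p then A ⊗ₖ B else 0 := by
  split_ifs <;> simp

variable [DecidableEq κ] [Fintype n] [DecidableEq n] [Fintype m] [DecidableEq m]

def kroneckerSumAlgHom [CommSemiring R] (F : κ → Matrix n n R) (hsum : ∑ i, F i = 1)
    (horth : ∀ i j, F i * F j = if i = j then F i else 0) :
    (κ → Matrix m m R) →ₐ[R] Matrix (n × m) (n × m) R where
  toFun N := ∑ i, F i ⊗ₖ N i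
  map_one' := by
    simp only [Pi.one_apply]
    rw [← sum_kronecker, hsum, one_kronecker_one]
  map_mul' N N' := by
    simp only [Pi.mul_apply, Finset.sum_mul_sum, ← mul_kronecker_mul, horth, ite_kronecker,
      Finset.sum_ite_eq, Finset.mem_univ, if_true]
  map_zero' := by simp
  map_add' N N' := by simp only [Pi.add_apply, kronecker_add, Finset.sum_add_distrib]
  commutes' r := by
    simp only [Pi.algebraMap_apply, Algebra.algebraMap_eq_smul_one, kronecker_smul,
      ← Finset.smul_sum, ← sum_kronecker, hsum, one_kronecker_one]

theorem exp_sum_kronecker (F : κ → Matrix n n ℂ) (hsum : ∑ i, F i = 1)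
    (horth : ∀ i j, F i * F j = if i = j then F i else 0) (N : κ → Matrix m m ℂ) :
    NormedSpace.exp (∑ i, F i ⊗ₖ N i) = ∑ i, F i ⊗ₖ NormedSpace.exp (N i) := by
  let : NormedRing (Matrix m m ℂ) := Matrix.linftyOpNormedRing
  let : NormedAlgebra ℂ (Matrix m m ℂ) := Matrix.linftyOpNormedAlgebra
  let : NormedAlgebra ℚ (Matrix m m ℂ) := Matrix.linftyOpNormedAlgebra
  let : NormedRing (Matrix (n × m) (n × m) ℂ) := Matrix.linftyOpNormedRing
  let : NormedAlgebra ℂ (Matrix (n × m) (n × m) ℂ) := Matrix.linftyOpNormedAlgebra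
  let ψ := kroneckerSumAlgHom (m := m) F hsum horth
  have hψ : Continuous ψ := ψ.toLinearMap.continuous_of_finiteDimensional
  have h := (NormedSpace.map_exp ψ hψ N).symm
  rwa [Pi.exp_def] at h

theorem exp_smul_one (z : ℂ) :
    NormedSpace.exp (z • (1 : Matrix m m ℂ)) = Complex.exp z • 1 := by
  let : NormedRing (Matrix m m ℂ) := Matrix.linftyOpNormedRing
  let : NormedAlgebra ℂ (Matrix m m ℂ) := Matrix.linftyOpNormedAlgebra
  have h := (NormedSpace.algebraMap_exp_comm (𝔸 := Matrix m m ℂ) z).symm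
  rw [Algebra.algebraMap_eq_smul_one, Algebra.algebraMap_eq_smul_one] at h
  rw [Complex.exp_eq_exp_ℂ]
  exact h

end Matrix

theorem SimpleGraph.adjMatrix_eq_sum_smul {V κ R : Type*} [Fintype V] [DecidableEq V]
    [Fintype κ] [Ring R] {G : SimpleGraph V} [DecidableRel G.Adj] {r : ℕ}
    (hG : G.IsRegularOfDegree r) {θ : κ → R} {F : κ → Matrix V V R} (hsum : ∑ i, F i = 1)
    (hspec : G.lapMatrix R = ∑ i, θ i • F i) :
    G.adjMatrix R = ∑ i, ((r : R) - θ i) • F i := by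
  have hdeg : G.degMatrix R = (r : R) • 1 := by
    rw [degMatrix, smul_one_eq_diagonal]
    simp [hG _]
  rw [← sub_sub_cancel (G.degMatrix R) (G.adjMatrix R), ← lapMatrix, hdeg, hspec, ← hsum]
  simp only [Finset.smul_sum, sub_smul, Finset.sum_sub_distrib]

section TransitionMatrix

variable {V : Type*} [Fintype V] [DecidableEq V]

theorem U_neg (M : Matrix V V ℂ) (t : ℝ) : U (-M) t = U M (-t) := by
  simp only [U, smul_neg, ofReal_neg, mul_neg, neg_smul]

theorem U_smul_one_sub (c : ℂ) (M : Matrix V V ℂ) (t : ℝ) :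
    U (c • 1 - M) t = Complex.exp (-(I * c * t)) • U (-M) t := by
  have hsplit : (-(I * t)) • (c • 1 - M) = (-(I * c * t)) • 1 + (-(I * t)) • -M := by
    module
  rw [U, U, hsplit, exp_add_of_commute _ _ ((Commute.one_left _).smul_left _),
    exp_smul_one, smul_mul_assoc, one_mul]

theorem U_kronecker_of_eq_sum_smul {κ W : Type*} [Fintype κ] [DecidableEq κ] [Fintype W]
    [DecidableEq W] {F : κ → Matrix V V ℂ} (hsum : ∑ i, F i = 1)
    (horth : ∀ i j, F i * F j = if i = j then F i else 0) {a : κ → ℝ} {A : Matrix V V ℂ}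
    (hA : A = ∑ i, (a i : ℂ) • F i) (B : Matrix W W ℂ) (t : ℝ) :
    U (A ⊗ₖ B) t = ∑ i, F i ⊗ₖ U B (a i * t) := by
  have hsplit : (-(I * t)) • (A ⊗ₖ B) = ∑ i, F i ⊗ₖ ((-(I * ((a i * t : ℝ) : ℂ))) • B) := by
    simp only [hA, sum_kronecker, Finset.smul_sum, smul_kronecker, kronecker_smul, smul_smul]
    congr! 2 with i
    push_cast
    ring
  rw [U, hsplit, exp_sum_kronecker F hsum horth]
  rfl

end TransitionMatrix

theorem stmt5_general {n m r₁ r₂ : ℕ} (G : SimpleGraph (Fin n)) [DecidableRel G.Adj]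
    (H : SimpleGraph (Fin m)) [DecidableRel H.Adj]
    (hG : G.IsRegularOfDegree r₁)
    {ι : Type*} [Fintype ι] [DecidableEq ι]
    (θ : ι → ℝ) (F : ι → Matrix (Fin n) (Fin n) ℂ)
    (hsum : ∑ i, F i = 1)
    (horth : ∀ i j, F i * F j = if i = j then F i else 0)
    (hspec : G.lapMatrix ℂ = ∑ i, ((θ i : ℝ) : ℂ) • F i)
    (t : ℝ) :
    U (((r₁ * r₂ : ℕ) : ℂ) • (1 : Matrix (Fin n × Fin m) (Fin n × Fin m) ℂ)
        - (G.adjMatrix ℂ) ⊗ₖ (H.adjMatrix ℂ)) t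
      = Complex.exp (-(Complex.I * ((r₁ * r₂ : ℕ) : ℂ) * (t : ℂ))) •
          ∑ i, (F i) ⊗ₖ (U (H.adjMatrix ℂ) ((θ i - (r₁ : ℝ)) * t)) := by
  have hA : G.adjMatrix ℂ = ∑ i, ((r₁ - θ i : ℝ) : ℂ) • F i := by
    rw [G.adjMatrix_eq_sum_smul hG hsum hspec]
    push_cast
    rfl
  rw [U_smul_one_sub, U_neg, U_kronecker_of_eq_sum_smul hsum horth hA]
  congr! 4 with i
  ring

theorem stmt5 {n m r₁ r₂ : ℕ} (G : SimpleGraph (Fin n)) [DecidableRel G.Adj]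
    (H : SimpleGraph (Fin m)) [DecidableRel H.Adj]
    (hG : G.IsRegularOfDegree r₁) (hH : H.IsRegularOfDegree r₂)
    {ι : Type*} [Fintype ι] [DecidableEq ι]
    (θ : ι → ℝ) (F : ι → Matrix (Fin n) (Fin n) ℂ)
    (hsum : ∑ i, F i = 1)
    (horth : ∀ i j, F i * F j = if i = j then F i else 0)
    (hspec : G.lapMatrix ℂ = ∑ i, ((θ i : ℝ) : ℂ) • F i)
    (t : ℝ) :
    U (((r₁ * r₂ : ℕ) : ℂ) • (1 : Matrix (Fin n × Fin m) (Fin n × Fin m) ℂ)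
        - (G.adjMatrix ℂ) ⊗ₖ (H.adjMatrix ℂ)) t
      = Complex.exp (-(Complex.I * ((r₁ * r₂ : ℕ) : ℂ) * (t : ℂ))) •
          ∑ i, (F i) ⊗ₖ (U (H.adjMatrix ℂ) ((θ i - (r₁ : ℝ)) * t)) :=
  stmt5_general G H hG θ F hsum horth hspec t
end

section
/- The cycle C_4 has Laplacian perfect pair state transfer: U_{L_{C_4}}(π/2)(e_0 − e_1) = e_2 − e_3, where the vertices 0,1,2,3 are arranged in cyclic order. Consequently, since C_4 is 2-regular, U_{A_{C_4}}(π/2)(e_0 − e_1) = −e_2 + e_3. -/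
open Matrix Complex Kronecker

/-- adjacency matrix of the cycle C₄ with vertices 0,1,2,3 in cyclic order -/
def AC4 : Matrix (Fin 4) (Fin 4) ℂ := !![0,1,0,1; 1,0,1,0; 0,1,0,1; 1,0,1,0]

/-!
With `v = e₀ - e₁` and `w = e₂ - e₃`, the vectors `v + w` and `v - w` are eigenvectors of the
adjacency matrix of `C₄` for the eigenvalues `-2` and `0`, hence of the Laplacian `2 - A` for
`4` and `2`. Writing `v = ((v + w) + (v - w)) / 2`, the walk at time `t` sends `v` to
`((λ + λ') / 2) v + ((λ - λ') / 2) w` with `λ, λ'` the phases `exp(-itμ)` of the two eigenvalues.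
At `t = π/2` the phase of `μ` is `(-i)^μ`; for both matrices the two phases are opposite, so the
`v`-component vanishes and the `w`-component is `±1`.
-/

open NormedSpace

namespace Matrix

variable {V : Type*} [Fintype V] [DecidableEq V]

theorem pow_mulVec_of_mulVec_eq_smul {R : Type*} [CommSemiring R] {M : Matrix V V R}
    {x : V → R} {μ : R} (h : M *ᵥ x = μ • x) (n : ℕ) : (M ^ n) *ᵥ x = μ ^ n • x := by
  induction n with
  | zero => simp
  | succ n ih => rw [pow_succ', ← mulVec_mulVec, ih, mulVec_smul, h, smul_smul, pow_succ]

theorem sub_smul_one_mulVec_of_mulVec_eq_smul {R : Type*} [CommRing R] {M : Matrix V V R}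
    {x : V → R} {μ : R} (h : M *ᵥ x = μ • x) (c : R) :
    (c • (1 : Matrix V V R) - M) *ᵥ x = (c - μ) • x := by
  rw [sub_mulVec, smul_mulVec, one_mulVec, h, sub_smul]

theorem exp_mulVec_of_mulVec_eq_smul {𝕂 : Type*} [RCLike 𝕂] {M : Matrix V V 𝕂} {x : V → 𝕂}
    {μ : 𝕂} (h : M *ᵥ x = μ • x) : exp M *ᵥ x = exp μ • x := by
  open scoped Norms.Operator in
  have hM := (exp_series_hasSum_exp' (𝕂 := 𝕂) M).map (mulVec.addMonoidHomLeft x)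
    (continuous_id.matrix_mulVec continuous_const)
  refine hM.unique ?_
  convert (exp_series_hasSum_exp' (𝕂 := 𝕂) μ).smul_const x using 1
  ext n : 1
  simp [mulVec.addMonoidHomLeft, smul_mulVec, pow_mulVec_of_mulVec_eq_smul h, smul_smul]

end Matrix

section QuantumWalk

variable {V : Type*} [Fintype V] [DecidableEq V]

theorem U_mulVec_of_mulVec_eq_smul {M : Matrix V V ℂ} {x : V → ℂ} {μ : ℂ}
    (h : M *ᵥ x = μ • x) (t : ℝ) : U M t *ᵥ x = Complex.exp (-(I * t) * μ) • x := by
  rw [U, Complex.exp_eq_exp_ℂ]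
  exact Matrix.exp_mulVec_of_mulVec_eq_smul (by rw [smul_mulVec, h, smul_smul])

theorem U_mulVec_of_mulVec_add_sub_eq_smul {M : Matrix V V ℂ} {v w : V → ℂ} {α β : ℂ}
    (hα : M *ᵥ (v + w) = α • (v + w)) (hβ : M *ᵥ (v - w) = β • (v - w)) (t : ℝ) :
    U M t *ᵥ v = ((Complex.exp (-(I * t) * α) + Complex.exp (-(I * t) * β)) / 2) • v
      + ((Complex.exp (-(I * t) * α) - Complex.exp (-(I * t) * β)) / 2) • w := by
  have hv : v = (1 / 2 : ℂ) • ((v + w) + (v - w)) := by module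
  conv_lhs => rw [hv, mulVec_smul, mulVec_add, U_mulVec_of_mulVec_eq_smul hα,
    U_mulVec_of_mulVec_eq_smul hβ]
  module

theorem exp_neg_I_mul_pi_div_two_mul_intCast (n : ℤ) :
    Complex.exp (-(I * ((Real.pi / 2 : ℝ) : ℂ)) * n) = (-I) ^ n := by
  rw [mul_comm, Complex.exp_int_mul, ← Complex.exp_neg_pi_div_two_mul_I]
  push_cast
  ring_nf

theorem U_pi_div_two_mulVec_of_mulVec_add_sub_eq_intCast_smul {M : Matrix V V ℂ}
    {v w : V → ℂ} {α β : ℤ} (hα : M *ᵥ (v + w) = (α : ℂ) • (v + w))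
    (hβ : M *ᵥ (v - w) = (β : ℂ) • (v - w)) :
    U M (Real.pi / 2) *ᵥ v
      = (((-I) ^ α + (-I) ^ β) / 2) • v + (((-I) ^ α - (-I) ^ β) / 2) • w := by
  rw [U_mulVec_of_mulVec_add_sub_eq_smul hα hβ, exp_neg_I_mul_pi_div_two_mul_intCast,
    exp_neg_I_mul_pi_div_two_mul_intCast]

end QuantumWalk

theorem AC4_mulVec_add : AC4 *ᵥ ((e 0 - e 1) + (e 2 - e 3))
    = ((-2 : ℤ) : ℂ) • ((e 0 - e 1) + (e 2 - e 3)) := by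
  ext i
  fin_cases i <;> simp [AC4, e, mulVec, dotProduct, Fin.sum_univ_four, Pi.single_apply] <;> norm_num

theorem AC4_mulVec_sub : AC4 *ᵥ ((e 0 - e 1) - (e 2 - e 3))
    = ((0 : ℤ) : ℂ) • ((e 0 - e 1) - (e 2 - e 3)) := by
  ext i
  fin_cases i <;> simp [AC4, e, mulVec, dotProduct, Fin.sum_univ_four, Pi.single_apply]

theorem stmt11 :
    (U ((2 : ℂ) • (1 : Matrix (Fin 4) (Fin 4) ℂ) - AC4) (Real.pi / 2)) *ᵥ
        (e (0 : Fin 4) - e (1 : Fin 4)) = e (2 : Fin 4) - e (3 : Fin 4)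
    ∧ (U AC4 (Real.pi / 2)) *ᵥ (e (0 : Fin 4) - e (1 : Fin 4))
        = -(e (2 : Fin 4)) + e (3 : Fin 4) := by
  have hL_add : ((2 : ℂ) • 1 - AC4) *ᵥ ((e 0 - e 1) + (e 2 - e 3))
      = ((4 : ℤ) : ℂ) • ((e 0 - e 1) + (e 2 - e 3)) := by
    rw [Matrix.sub_smul_one_mulVec_of_mulVec_eq_smul AC4_mulVec_add]
    norm_num
  have hL_sub : ((2 : ℂ) • 1 - AC4) *ᵥ ((e 0 - e 1) - (e 2 - e 3))
      = ((2 : ℤ) : ℂ) • ((e 0 - e 1) - (e 2 - e 3)) := by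
    rw [Matrix.sub_smul_one_mulVec_of_mulVec_eq_smul AC4_mulVec_sub]
    norm_num
  rw [U_pi_div_two_mulVec_of_mulVec_add_sub_eq_intCast_smul hL_add hL_sub,
    U_pi_div_two_mulVec_of_mulVec_add_sub_eq_intCast_smul AC4_mulVec_add AC4_mulVec_sub]
  constructor
  · simp [zpow_ofNat, pow_succ]
  · simp only [Int.reduceNeg, _root_.zpow_neg, zpow_ofNat, pow_succ, pow_zero, mul_neg, one_mul,
      neg_mul, I_mul_I, neg_neg, inv_neg, inv_one, neg_add_cancel, zero_div, zero_smul, zero_add]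
    module
end
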